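/- arXiv:2205.02210 — 5 statements merged into one kernel-verified Lean document; each statement's English description precedes it below -/
import Mathlib

section
/- If the system a_i + 2b_i + 3c_i = n for all i in {1,...,n^2}, together with sum_{i=1}^{n^2} a_i = n, sum_{i=1}^{n^2} b_i = 3*binom(n,2), and sum_{i=1}^{n^2} c_i = 2*binom(n,3), has a nonnegative integral solution, then n ≡ 0 or 2 (mod 3), or n = 1. -/
/-- If the system `a_i + 2b_i + 3c_i = n` for all `i ∈ {1,…,n²}`, together with
`∑ a_i = n`, `∑ b_i = 3·C(n,2)`, `∑ c_i = 2·C(n,3)`, has a nonnegative integral solution,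
then `n ≡ 0` or `2 (mod 3)`, or `n = 1`. -/
theorem stmt0 (n : ℕ) (hn : 0 < n) (a b c : Fin (n ^ 2) → ℕ)
    (h1 : ∀ i, a i + 2 * b i + 3 * c i = n)
    (h2 : ∑ i, a i = n)
    (h3 : ∑ i, b i = 3 * Nat.choose n 2)
    (h4 : ∑ i, c i = 2 * Nat.choose n 3) :
    n % 3 = 0 ∨ n % 3 = 2 ∨ n = 1 := by
  by_cases hm : n % 3 = 1 ∧ 2 ≤ n
  swap
  · omega
  obtain ⟨hm1, hm2⟩ := hm
  exfalso
  -- the set of indices where `a i ≠ 0`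
  set T : Finset (Fin (n ^ 2)) := Finset.univ.filter (fun i => a i ≠ 0) with hT
  have hTcard : T.card ≤ n := by
    calc T.card = T.card • 1 := by simp
    _ ≤ ∑ i ∈ T, a i :=
          Finset.card_nsmul_le_sum T a 1 (by
            intro i hi
            simp only [hT, Finset.mem_filter] at hi
            omega)
    _ ≤ ∑ i, a i := Finset.sum_le_sum_of_subset (Finset.filter_subset _ _)
    _ = n := h2
  -- on the complement, `b i ≥ 2`
  have hb2 : ∀ i ∈ Tᶜ, 2 ≤ b i := by
    intro i hi
    simp only [hT, Finset.mem_compl, Finset.mem_filter, Finset.mem_univ, true_and,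
      not_not] at hi
    have := h1 i
    rw [hi] at this
    omega
  have hTc : n ^ 2 - n ≤ Tᶜ.card := by
    have := Finset.card_compl T
    simp only [Fintype.card_fin] at this
    omega
  have hsum : 2 * (n ^ 2 - n) ≤ ∑ i, b i := by
    calc 2 * (n ^ 2 - n) ≤ 2 * Tᶜ.card := by omega
    _ = Tᶜ.card • 2 := by rw [smul_eq_mul]; ring
    _ ≤ ∑ i ∈ Tᶜ, b i := Finset.card_nsmul_le_sum Tᶜ b 2 hb2
    _ ≤ ∑ i, b i := Finset.sum_le_sum_of_subset (Finset.subset_univ _)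
  rw [h3, Nat.choose_two_right] at hsum
  have hmeven : n * (n - 1) % 2 = 0 := Nat.even_iff.mp (Nat.even_mul_pred_self n)
  have hsq : n ^ 2 = n * n := sq n
  have hge : 2 ≤ n * (n - 1) := by
    calc 2 = 2 * 1 := rfl
    _ ≤ n * (n - 1) := Nat.mul_le_mul hm2 (by omega)
  have hnn : n ^ 2 - n = n * (n - 1) := by rw [hsq, Nat.mul_sub_one]
  rw [hnn] at hsum
  set m := n * (n - 1)
  omega
end

section
/- For any natural number n with n > 1 and n ≡ 1 (mod 3), the system a_i + 2b_i + 3c_i = n for all i in {1,...,n^2}, sum_{i=1}^{n^2} a_i = n, sum_{i=1}^{n^2} b_i = 3*binom(n,2), sum_{i=1}^{n^2} c_i = 2*binom(n,3) has no solution in nonnegative integers. -/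
/-- For any natural number `n > 1` with `n ≡ 1 (mod 3)`, the system
`a_i + 2b_i + 3c_i = n` for all `i ∈ {1,…,n²}`, `∑ a_i = n`, `∑ b_i = 3·C(n,2)`,
`∑ c_i = 2·C(n,3)` has no solution in nonnegative integers. -/
theorem stmt2 (n : ℕ) (hn : 1 < n) (hmod : n % 3 = 1) :
    ¬ ∃ a b c : Fin (n ^ 2) → ℕ,
      (∀ i, a i + 2 * b i + 3 * c i = n) ∧
      (∑ i, a i = n) ∧
      (∑ i, b i = 3 * Nat.choose n 2) ∧
      (∑ i, c i = 2 * Nat.choose n 3) := by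
  rintro ⟨a, b, c, heq, ha, hb, hc⟩
  classical
  set S : Finset (Fin (n ^ 2)) := Finset.univ.filter (fun i => a i = 0) with hS
  -- on S, b i ≥ 2 (since 2 b ≡ 1 mod 3)
  have hbS : ∀ i ∈ S, 2 ≤ b i := by
    intro i hi
    have hai : a i = 0 := by simpa [hS] using hi
    have h := heq i
    omega
  -- complement has card ≤ n
  have hcompl : (Finset.univ \ S).card ≤ n := by
    have h1 : (Finset.univ \ S).card ≤ ∑ i ∈ Finset.univ \ S, a i := by
      rw [Finset.card_eq_sum_ones]
      refine Finset.sum_le_sum (fun i hi => ?_)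
      have : ¬ a i = 0 := by
        simp only [hS, Finset.mem_sdiff, Finset.mem_filter, Finset.mem_univ, true_and] at hi
        exact hi
      omega
    have h2 : ∑ i ∈ Finset.univ \ S, a i ≤ ∑ i, a i :=
      Finset.sum_le_sum_of_subset (Finset.sdiff_subset)
    omega
  have hcardS : n ^ 2 ≤ S.card + n := by
    have := Finset.card_sdiff_add_card_eq_card (Finset.subset_univ S)
    have hu : (Finset.univ : Finset (Fin (n ^ 2))).card = n ^ 2 := by simp
    omega
  -- sum of b over S
  have hsum1 : 2 * S.card ≤ ∑ i ∈ S, b i := by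
    calc 2 * S.card = ∑ i ∈ S, 2 := by rw [Finset.sum_const, smul_eq_mul, mul_comm]
    _ ≤ ∑ i ∈ S, b i := Finset.sum_le_sum hbS
  have hsum2 : ∑ i ∈ S, b i ≤ ∑ i, b i := Finset.sum_le_sum_of_subset (Finset.subset_univ S)
  -- 2 * C(n,2) + n = n^2
  have h2C : 2 * Nat.choose n 2 + n = n ^ 2 := by
    obtain ⟨m, rfl⟩ : ∃ m, n = m + 1 := ⟨n - 1, by omega⟩
    have he : Even ((m + 1) * m) := by rw [mul_comm]; exact Nat.even_mul_succ_self m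
    have hd : 2 * ((m + 1) * m / 2) = (m + 1) * m := Nat.two_mul_div_two_of_even he
    rw [Nat.choose_two_right]
    simp only [Nat.add_sub_cancel]
    rw [hd]; ring
  have h2n : 2 * n ≤ n ^ 2 := by nlinarith
  omega
end

section
/- For every natural number n ≥ 27 with n ≡ 3 (mod 6), setting one index with (a,b,c) = (n,0,0), then 3(n+2) indices with (a,b,c) = (0, (n-3)/2, 1), one index with (a,b,c) = (0, 9, (n-18)/3), and n^2 - 3n - 8 indices with (a,b,c) = (0, 0, n/3), yields a nonnegative integral solution of the system: a_i + 2b_i + 3c_i = n for all i, sum a_i = n, sum b_i = 3*binom(n,2), sum c_i = 2*binom(n,3). -/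
lemma sum_piece_aux (N M v0 v1 v2 v3 : ℕ) (h1 : 1 ≤ M) (hMN : M + 1 ≤ N) :
    ∑ i ∈ Finset.range N,
      (if i = 0 then v0 else if i < M then v1 else if i = M then v2 else v3)
      = v0 + (M - 1) * v1 + v2 + (N - (M + 1)) * v3 := by
  rw [Finset.range_eq_Ico,
      ← Finset.sum_Ico_consecutive _ (Nat.zero_le (M + 1)) hMN,
      ← Finset.sum_Ico_consecutive _ (Nat.zero_le M) (Nat.le_succ M),
      ← Finset.sum_Ico_consecutive _ (Nat.zero_le 1) h1]
  have e0 : ∑ i ∈ Finset.Ico 0 1,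
      (if i = 0 then v0 else if i < M then v1 else if i = M then v2 else v3) = v0 := by
    simp
  have e1 : ∑ i ∈ Finset.Ico 1 M,
      (if i = 0 then v0 else if i < M then v1 else if i = M then v2 else v3)
      = (M - 1) * v1 := by
    rw [Finset.sum_congr rfl (g := fun _ => v1) (fun i hi => by
      rw [Finset.mem_Ico] at hi
      rw [if_neg (by omega), if_pos (by omega)])]
    simp [Nat.card_Ico]
  have e2 : ∑ i ∈ Finset.Ico M (M + 1),
      (if i = 0 then v0 else if i < M then v1 else if i = M then v2 else v3) = v2 := by
    rw [Finset.sum_congr rfl (g := fun _ => v2) (fun i hi => by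
      rw [Finset.mem_Ico] at hi
      rw [if_neg (by omega), if_neg (by omega), if_pos (by omega)])]
    simp [Nat.card_Ico]
  have e3 : ∑ i ∈ Finset.Ico (M + 1) N,
      (if i = 0 then v0 else if i < M then v1 else if i = M then v2 else v3)
      = (N - (M + 1)) * v3 := by
    rw [Finset.sum_congr rfl (g := fun _ => v3) (fun i hi => by
      rw [Finset.mem_Ico] at hi
      rw [if_neg (by omega), if_neg (by omega), if_neg (by omega)])]
    simp [Nat.card_Ico]
  rw [e0, e1, e2, e3]

/-- For `n ≥ 27` with `n ≡ 3 (mod 6)`, one index with `(a,b,c) = (n,0,0)`, then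
`3(n+2)` indices with `(0, (n-3)/2, 1)`, one index with `(0, 9, (n-18)/3)`, and `n²-3n-8`
indices with `(0, 0, n/3)` give a nonnegative integral solution of the system. -/
theorem stmt5 (n : ℕ) (hn : 27 ≤ n) (h6 : n % 6 = 3)
    (a b c : Fin (n ^ 2) → ℕ)
    (ha : ∀ i : Fin (n ^ 2), a i = if i.val = 0 then n else 0)
    (hb : ∀ i : Fin (n ^ 2), b i =
      if i.val = 0 then 0 else
      if i.val < 1 + 3 * (n + 2) then (n - 3) / 2 else
      if i.val = 1 + 3 * (n + 2) then 9 else 0)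
    (hc : ∀ i : Fin (n ^ 2), c i =
      if i.val = 0 then 0 else
      if i.val < 1 + 3 * (n + 2) then 1 else
      if i.val = 1 + 3 * (n + 2) then (n - 18) / 3 else n / 3) :
    (∀ i, a i + 2 * b i + 3 * c i = n) ∧
    (∑ i, a i = n) ∧
    (∑ i, b i = 3 * Nat.choose n 2) ∧
    (∑ i, c i = 2 * Nat.choose n 3) := by
  obtain ⟨k, rfl⟩ : ∃ k, n = 6 * k + 27 := ⟨(n - 27) / 6, by omega⟩
  have hMN : (18 * k + 88) + 1 ≤ (6 * k + 27) ^ 2 := by nlinarith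
  have hsub1 : 18 * k + 88 - 1 = 18 * k + 87 := by omega
  have hsub2 : (6 * k + 27) ^ 2 - (18 * k + 88 + 1) = 36 * k ^ 2 + 306 * k + 640 :=
    Nat.sub_eq_of_eq_add (by ring)
  have hch2 : Nat.choose (6 * k + 27) 2 = (3 * k + 13) * (6 * k + 27) := by
    rw [Nat.choose_two_right]
    have h1 : (6 * k + 27) * (6 * k + 27 - 1) = 2 * ((3 * k + 13) * (6 * k + 27)) := by
      have e : 6 * k + 27 - 1 = 6 * k + 26 := by omega
      rw [e]; ring
    rw [h1, Nat.mul_div_cancel_left _ (by norm_num)]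
  have hch3 : Nat.choose (6 * k + 27) 3 = (2 * k + 9) * (3 * k + 13) * (6 * k + 25) := by
    have h1 := Nat.choose_succ_right_eq (6 * k + 27) 2
    rw [hch2] at h1
    have e : 6 * k + 27 - 2 = 6 * k + 25 := by omega
    rw [e] at h1
    have h2 : (6 * k + 27).choose 3 * 3 = ((2 * k + 9) * (3 * k + 13) * (6 * k + 25)) * 3 := by
      rw [h1]; ring
    exact Nat.eq_of_mul_eq_mul_right (by norm_num) h2
  refine ⟨?_, ?_, ?_, ?_⟩
  · intro i
    rw [ha i, hb i, hc i]
    split_ifs <;> omega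
  · have ha' : ∑ i, a i = ∑ i : Fin ((6 * k + 27) ^ 2),
        (fun j => if j = 0 then 6 * k + 27 else
          if j < 18 * k + 88 then 0 else if j = 18 * k + 88 then 0 else 0) i.val :=
      Finset.sum_congr rfl (fun i _ => by rw [ha i]; dsimp only; split_ifs <;> omega)
    rw [ha', Fin.sum_univ_eq_sum_range (fun j => if j = 0 then 6 * k + 27 else
      if j < 18 * k + 88 then 0 else if j = 18 * k + 88 then 0 else 0) ((6 * k + 27) ^ 2),
      sum_piece_aux _ _ _ _ _ _ (by omega) hMN]
    omega
  · have hb' : ∑ i, b i = ∑ i : Fin ((6 * k + 27) ^ 2),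
        (fun j => if j = 0 then 0 else
          if j < 18 * k + 88 then 3 * k + 12 else if j = 18 * k + 88 then 9 else 0) i.val :=
      Finset.sum_congr rfl (fun i _ => by rw [hb i]; dsimp only; split_ifs <;> omega)
    rw [hb', Fin.sum_univ_eq_sum_range (fun j => if j = 0 then 0 else
      if j < 18 * k + 88 then 3 * k + 12 else if j = 18 * k + 88 then 9 else 0) ((6 * k + 27) ^ 2),
      sum_piece_aux _ _ _ _ _ _ (by omega) hMN, hsub1, hch2]
    ring
  · have hc' : ∑ i, c i = ∑ i : Fin ((6 * k + 27) ^ 2),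
        (fun j => if j = 0 then 0 else
          if j < 18 * k + 88 then 1 else if j = 18 * k + 88 then 2 * k + 3 else 2 * k + 9) i.val :=
      Finset.sum_congr rfl (fun i _ => by rw [hc i]; dsimp only; split_ifs <;> omega)
    rw [hc', Fin.sum_univ_eq_sum_range (fun j => if j = 0 then 0 else
      if j < 18 * k + 88 then 1 else if j = 18 * k + 88 then 2 * k + 3 else 2 * k + 9) ((6 * k + 27) ^ 2),
      sum_piece_aux _ _ _ _ _ _ (by omega) hMN, hsub1, hsub2, hch3]
    ring
end

section
/- The system a_i + 2b_i + 3c_i = n for all i in {1,...,n^2}, sum a_i = n, sum b_i = 3*binom(n,2), sum c_i = 2*binom(n,3) has a nonnegative integral solution if and only if n = 1 or (n ≡ 0 or 2 (mod 3) and n ≠ 3). -/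
lemma twoc (n : ℕ) : 2 * Nat.choose n 2 = n * (n - 1) := by
  induction n with
  | zero => simp
  | succ m ih =>
    rw [Nat.choose_succ_succ, Nat.choose_one_right, Nat.mul_add, ih]
    cases m with
    | zero => simp
    | succ p => simp [Nat.succ_sub_one]; ring

lemma sixc (n : ℕ) : 6 * Nat.choose n 3 = n * (n - 1) * (n - 2) := by
  induction n with
  | zero => simp
  | succ m ih =>
    rw [Nat.choose_succ_succ, Nat.mul_add, ih]
    have h2 := twoc m
    cases m with
    | zero => simp
    | succ p =>
      cases p with
      | zero => simp
      | succ q =>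
        simp only [Nat.succ_sub_one] at *
        have : (q + 1 + 1 : ℕ) - 2 = q := by omega
        rw [this]
        have hq : (q:ℕ) + 1 + 1 + 1 - 2 = q + 1 := by omega
        rw [hq]
        nlinarith [h2]

lemma sum_min_tsub (m : ℕ) : ∀ (N S : ℕ), S ≤ N * m →
    (∑ i ∈ Finset.range N, min m (S - m * i)) = S := by
  intro N
  induction N with
  | zero => intro S h; simp at h ⊢; omega
  | succ N ih =>
    intro S h
    rw [Finset.sum_range_succ']
    have e : ∀ i : ℕ, min m (S - m * (i + 1)) = min m ((S - m) - m * i) := by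
      intro i
      have : m * (i + 1) = m * i + m := by ring
      rw [this]
      omega
    simp only [e]
    have hNm : (N + 1) * m = N * m + m := by ring
    rw [ih (S - m) (by omega)]
    simp only [Nat.mul_zero, Nat.sub_zero]
    omega

lemma split_sum (N K : ℕ) (hK : K ≤ N) (x : ℕ) (g : ℕ → ℕ) :
    (∑ i : Fin N, (if (i : ℕ) < K then x else g ((i : ℕ) - K)))
      = K * x + ∑ j ∈ Finset.range (N - K), g j := by
  rw [Fin.sum_univ_eq_sum_range (fun i => if i < K then x else g (i - K)) N]
  have hN : N = K + (N - K) := by omega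
  rw [hN, Finset.sum_range_add]
  have hKK : K + (N - K) - K = N - K := by omega
  rw [hKK]
  have e1 : ∀ i ∈ Finset.range K, (if i < K then x else g (i - K)) = x := by
    intro i hi; simp [Finset.mem_range.mp hi]
  have e2 : ∀ j ∈ Finset.range (N - K),
      (if K + j < K then x else g (K + j - K)) = g j := by
    intro j hj; simp
  rw [Finset.sum_congr rfl e1, Finset.sum_congr rfl e2, Finset.sum_const, Finset.card_range,
    smul_eq_mul]

lemma construct (n K A B B2 base m T : ℕ)
    (hKn : K ≤ n ^ 2)
    (heq1 : A + 2 * B = n)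
    (heq2 : 2 * B2 + 3 * base = n)
    (hKA : K * A = n)
    (hmB : 3 * m ≤ B2)
    (hT : T ≤ (n ^ 2 - K) * m)
    (hc : (n ^ 2 - K) * base + 2 * T = 2 * Nat.choose n 3)
    (hb : K * B + (n ^ 2 - K) * B2 = 3 * Nat.choose n 2 + 3 * T) :
    ∃ a b c : Fin (n ^ 2) → ℕ,
      (∀ i, a i + 2 * b i + 3 * c i = n) ∧
      (∑ i, a i = n) ∧
      (∑ i, b i = 3 * Nat.choose n 2) ∧
      (∑ i, c i = 2 * Nat.choose n 3) := by
  set h : ℕ → ℕ := fun j => min m (T - m * j) with hh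
  have hhm : ∀ j, h j ≤ m := fun j => min_le_left _ _
  have hsum : ∑ j ∈ Finset.range (n ^ 2 - K), h j = T := sum_min_tsub m (n ^ 2 - K) T hT
  refine ⟨fun i => if (i : ℕ) < K then A else 0,
          fun i => if (i : ℕ) < K then B else B2 - 3 * h ((i : ℕ) - K),
          fun i => if (i : ℕ) < K then 0 else base + 2 * h ((i : ℕ) - K), ?_, ?_, ?_, ?_⟩
  · intro i
    by_cases hi : (i : ℕ) < K
    · simp only [hi, if_pos]; omega
    · simp only [hi, if_neg, if_false]
      have := hhm ((i : ℕ) - K)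
      omega
  · rw [split_sum _ _ hKn A (fun _ => 0)]
    simp [hKA]
  · rw [split_sum _ _ hKn B (fun j => B2 - 3 * h j)]
    have key : ∑ j ∈ Finset.range (n ^ 2 - K), (B2 - 3 * h j) + 3 * T = (n ^ 2 - K) * B2 := by
      have : ∑ j ∈ Finset.range (n ^ 2 - K), (B2 - 3 * h j)
            + ∑ j ∈ Finset.range (n ^ 2 - K), 3 * h j
          = ∑ j ∈ Finset.range (n ^ 2 - K), B2 := by
        rw [← Finset.sum_add_distrib]
        refine Finset.sum_congr rfl fun j _ => ?_
        have := hhm j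
        omega
      rw [← Finset.mul_sum, hsum] at this
      simpa [Finset.sum_const, Finset.card_range, mul_comm] using this
    omega
  · rw [split_sum _ _ hKn 0 (fun j => base + 2 * h j)]
    rw [Finset.sum_add_distrib, Finset.sum_const, Finset.card_range, smul_eq_mul,
      ← Finset.mul_sum, hsum]
    omega

/-- The system `a_i + 2b_i + 3c_i = n` for all `i ∈ {1,…,n²}`, `∑ a_i = n`,
`∑ b_i = 3·C(n,2)`, `∑ c_i = 2·C(n,3)` has a nonnegative integral solution if and only if
`n = 1` or (`n ≡ 0` or `2 (mod 3)` and `n ≠ 3`). -/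
theorem stmt7 (n : ℕ) (hn : 0 < n) :
    (∃ a b c : Fin (n ^ 2) → ℕ,
      (∀ i, a i + 2 * b i + 3 * c i = n) ∧
      (∑ i, a i = n) ∧
      (∑ i, b i = 3 * Nat.choose n 2) ∧
      (∑ i, c i = 2 * Nat.choose n 3)) ↔
    (n = 1 ∨ ((n % 3 = 0 ∨ n % 3 = 2) ∧ n ≠ 3)) := by
  constructor
  · rintro ⟨a, b, c, h1, h2, h3, h4⟩
    have k2 : n ≠ 3 := by
      rintro rfl
      have hb1 : ∀ i : Fin (3 ^ 2), b i + c i ≤ 1 := fun i => by have := h1 i; omega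
      have hsum : (∑ i : Fin (3 ^ 2), (b i + c i)) ≤ 9 * 1 := by
        have := Finset.sum_le_card_nsmul (Finset.univ : Finset (Fin (3 ^ 2)))
          (fun i => b i + c i) 1 (fun i _ => hb1 i)
        simpa using this
      rw [Finset.sum_add_distrib, h3, h4] at hsum
      norm_num [Nat.choose] at hsum
    have k1 : n = 1 ∨ n % 3 ≠ 1 := by
      by_cases he : n = 1
      · exact Or.inl he
      refine Or.inr fun hm => ?_
      have hge : 4 ≤ n := by omega
      have hb1 : ∀ i : Fin (n ^ 2), 2 ≤ 2 * a i + b i := fun i => by have := h1 i; omega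
      have hsum : n ^ 2 * 2 ≤ ∑ i : Fin (n ^ 2), (2 * a i + b i) := by
        have := Finset.card_nsmul_le_sum (Finset.univ : Finset (Fin (n ^ 2)))
          (fun i => 2 * a i + b i) 2 (fun i _ => hb1 i)
        simpa [mul_comm] using this
      rw [Finset.sum_add_distrib, ← Finset.mul_sum, h2, h3] at hsum
      have h2c := twoc n
      obtain ⟨d, rfl⟩ : ∃ d, n = d + 4 := ⟨n - 4, by omega⟩
      have e : d + 4 - 1 = d + 3 := by omega
      rw [e] at h2c
      nlinarith [hsum, h2c]
    omega
  · rintro (rfl | ⟨h3, hne3⟩)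
    · exact ⟨fun _ => 1, fun _ => 0, fun _ => 0, by decide, by decide, by decide, by decide⟩
    have hcase : n % 6 = 0 ∨ n % 6 = 2 ∨ n % 6 = 3 ∨ n % 6 = 5 := by omega
    rcases hcase with h6 | h6 | h6 | h6
    · -- n = 6s + 6
      obtain ⟨s, rfl⟩ : ∃ s, n = 6 * s + 6 := ⟨n / 6 - 1, by omega⟩
      have hc2 : Nat.choose (6 * s + 6) 2 = (3 * s + 3) * (6 * s + 5) := by
        have h := twoc (6 * s + 6)
        have e : (6 * s + 6) - 1 = 6 * s + 5 := by omega
        rw [e] at h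
        refine Nat.eq_of_mul_eq_mul_left (by norm_num : 0 < 2) ?_
        rw [h]; ring
      have hc3 : Nat.choose (6 * s + 6) 3 = (s + 1) * (6 * s + 5) * (6 * s + 4) := by
        have h := sixc (6 * s + 6)
        have e1 : (6 * s + 6) - 1 = 6 * s + 5 := by omega
        have e2 : (6 * s + 6) - 2 = 6 * s + 4 := by omega
        rw [e1, e2] at h
        refine Nat.eq_of_mul_eq_mul_left (by norm_num : 0 < 6) ?_
        rw [h]; ring
      have hM : (6 * s + 6) ^ 2 - 1 = 36 * s ^ 2 + 72 * s + 35 := by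
        have : (6 * s + 6) ^ 2 = 36 * s ^ 2 + 72 * s + 36 := by ring
        omega
      refine construct (6 * s + 6) 1 (6 * s + 6) 0 (3 * s + 3) 0 (s + 1)
        ((s + 1) * (6 * s + 5) * (6 * s + 4)) (by nlinarith) (by ring) (by ring) (by ring)
        (by omega) ?_ ?_ ?_
      · rw [hM]; nlinarith
      · rw [hc3, hM]; ring
      · rw [hc2, hM]; ring
    · -- n = 6s + 2
      obtain ⟨s, rfl⟩ : ∃ s, n = 6 * s + 2 := ⟨n / 6, by omega⟩
      have hc2 : Nat.choose (6 * s + 2) 2 = (3 * s + 1) * (6 * s + 1) := by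
        have h := twoc (6 * s + 2)
        have e : (6 * s + 2) - 1 = 6 * s + 1 := by omega
        rw [e] at h
        refine Nat.eq_of_mul_eq_mul_left (by norm_num : 0 < 2) ?_
        rw [h]; ring
      have hc3 : Nat.choose (6 * s + 2) 3 = s * (6 * s + 2) * (6 * s + 1) := by
        have h := sixc (6 * s + 2)
        have e1 : (6 * s + 2) - 1 = 6 * s + 1 := by omega
        have e2 : (6 * s + 2) - 2 = 6 * s := by omega
        rw [e1, e2] at h
        refine Nat.eq_of_mul_eq_mul_left (by norm_num : 0 < 6) ?_
        rw [h]; ring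
      have hM : (6 * s + 2) ^ 2 - 1 = 36 * s ^ 2 + 24 * s + 3 := by
        have : (6 * s + 2) ^ 2 = 36 * s ^ 2 + 24 * s + 4 := by ring
        omega
      refine construct (6 * s + 2) 1 (6 * s + 2) 0 (3 * s + 1) 0 s
        (s * (6 * s + 2) * (6 * s + 1)) (by nlinarith) (by ring) (by ring) (by ring)
        (by omega) ?_ ?_ ?_
      · rw [hM]; nlinarith
      · rw [hc3, hM]; ring
      · rw [hc2, hM]; ring
    · -- n = 6s + 9
      obtain ⟨s, rfl⟩ : ∃ s, n = 6 * s + 9 := ⟨n / 6 - 1, by omega⟩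
      have hc2 : Nat.choose (6 * s + 9) 2 = (6 * s + 9) * (3 * s + 4) := by
        have h := twoc (6 * s + 9)
        have e : (6 * s + 9) - 1 = 6 * s + 8 := by omega
        rw [e] at h
        refine Nat.eq_of_mul_eq_mul_left (by norm_num : 0 < 2) ?_
        rw [h]; ring
      have hc3 : Nat.choose (6 * s + 9) 3 = (2 * s + 3) * (3 * s + 4) * (6 * s + 7) := by
        have h := sixc (6 * s + 9)
        have e1 : (6 * s + 9) - 1 = 6 * s + 8 := by omega
        have e2 : (6 * s + 9) - 2 = 6 * s + 7 := by omega
        rw [e1, e2] at h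
        refine Nat.eq_of_mul_eq_mul_left (by norm_num : 0 < 6) ?_
        rw [h]; ring
      have hM : (6 * s + 9) ^ 2 - (6 * s + 9) = 36 * s ^ 2 + 102 * s + 72 := by
        have : (6 * s + 9) ^ 2 = 36 * s ^ 2 + 108 * s + 81 := by ring
        omega
      refine construct (6 * s + 9) (6 * s + 9) 1 (3 * s + 4) (3 * s + 3) 1 (s + 1)
        ((2 * s + 3) * (3 * s + 4) * (6 * s + 4)) (by nlinarith) (by ring) (by ring) (by ring)
        (by omega) ?_ ?_ ?_
      · rw [hM]; nlinarith
      · rw [hc3, hM]; ring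
      · rw [hc2, hM]; ring
    · -- n = 6s + 5
      obtain ⟨s, rfl⟩ : ∃ s, n = 6 * s + 5 := ⟨n / 6, by omega⟩
      have hc2 : Nat.choose (6 * s + 5) 2 = (6 * s + 5) * (3 * s + 2) := by
        have h := twoc (6 * s + 5)
        have e : (6 * s + 5) - 1 = 6 * s + 4 := by omega
        rw [e] at h
        refine Nat.eq_of_mul_eq_mul_left (by norm_num : 0 < 2) ?_
        rw [h]; ring
      have hc3 : Nat.choose (6 * s + 5) 3 = (6 * s + 5) * (3 * s + 2) * (2 * s + 1) := by
        have h := sixc (6 * s + 5)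
        have e1 : (6 * s + 5) - 1 = 6 * s + 4 := by omega
        have e2 : (6 * s + 5) - 2 = 6 * s + 3 := by omega
        rw [e1, e2] at h
        refine Nat.eq_of_mul_eq_mul_left (by norm_num : 0 < 6) ?_
        rw [h]; ring
      have hM : (6 * s + 5) ^ 2 - (6 * s + 5) = 36 * s ^ 2 + 54 * s + 20 := by
        have : (6 * s + 5) ^ 2 = 36 * s ^ 2 + 60 * s + 25 := by ring
        omega
      refine construct (6 * s + 5) (6 * s + 5) 1 (3 * s + 2) (3 * s + 1) 1 s
        ((6 * s + 5) * (6 * s + 4) * s) (by nlinarith) (by ring) (by ring) (by ring)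
        (by omega) ?_ ?_ ?_
      · rw [hM]; nlinarith
      · rw [hc3, hM]; ring
      · rw [hc2, hM]; ring
end

section
/- If a symmetric latin cube L of order n exists, and i ≠ j, then the three symbols L_{iij}, L_{iji}, L_{ijj} are pairwise distinct. -/
/-- An `n × n × n` array on `n²` symbols is a latin cube if every layer parallel to each
face contains each symbol exactly once, i.e. the restriction of `L` to each layer is a
bijection onto the symbol set. -/
def IsLatinCube {n : ℕ} (L : Fin n → Fin n → Fin n → Fin (n ^ 2)) : Prop :=
  (∀ i, Function.Bijective (fun p : Fin n × Fin n => L i p.1 p.2)) ∧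
  (∀ j, Function.Bijective (fun p : Fin n × Fin n => L p.1 j p.2)) ∧
  (∀ l, Function.Bijective (fun p : Fin n × Fin n => L p.1 p.2 l))

/-- A cube `L` is symmetric if `L i j l = L j l i = L l i j` for pairwise distinct
`i, j, l`, and `L i i j = L j j i`, `L i j i = L j i j`, `L i j j = L j i i` for all
`i, j`. -/
def IsSymmetricCube {n : ℕ} (L : Fin n → Fin n → Fin n → Fin (n ^ 2)) : Prop :=
  (∀ i j l : Fin n, i ≠ j → j ≠ l → i ≠ l → L i j l = L j l i ∧ L j l i = L l i j) ∧
  (∀ i j : Fin n, L i i j = L j j i ∧ L i j i = L j i j ∧ L i j j = L j i i)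

/-- In a symmetric latin cube `L` of order `n`, for `i ≠ j` the three
symbols `L i i j`, `L i j i`, `L i j j` are pairwise distinct. -/
theorem stmt13 (n : ℕ) (L : Fin n → Fin n → Fin n → Fin (n ^ 2))
    (hL : IsLatinCube L) (hS : IsSymmetricCube L) (i j : Fin n) (hij : i ≠ j) :
    L i i j ≠ L i j i ∧ L i i j ≠ L i j j ∧ L i j i ≠ L i j j := by
  have hinj := (hL.1 i).injective
  refine ⟨fun h => ?_, fun h => ?_, fun h => ?_⟩
  · have := hinj (a₁ := (i, j)) (a₂ := (j, i)) h
    exact hij (congrArg Prod.fst this)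
  · have := hinj (a₁ := (i, j)) (a₂ := (j, j)) h
    exact hij (congrArg Prod.fst this)
  · have := hinj (a₁ := (j, i)) (a₂ := (j, j)) h
    exact hij (congrArg Prod.snd this)
end
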